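/- Consider a declared welfare maximizer mechanism whose bid space 𝓑 satisfies Add ⊆ 𝓑 ⊆ XOS (it contains all additive valuations and consists of XOS valuations). Then for every γ ≥ 0, every profile v = (v_1, …, v_n) of XOS valuations, and every pure Nash equilibrium b for v in which each bid b_i has exposure factor γ, it holds that (6 + 4γ) · ∑_i v_i(X_i(b)) ≥ OPT(v). In other words, with this restricted bidding language, PoA_γ ≤ 6 + 4γ. -/

import Mathlib

open Finset

/-- A valuation on `m` items: normalized at `∅`, monotone, nonnegative. -/
def IsValuation {m : ℕ} (v : Finset (Fin m) → ℝ) : Prop :=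
  v ∅ = 0 ∧ (∀ S T : Finset (Fin m), S ⊆ T → v S ≤ v T) ∧ (∀ S, 0 ≤ v S)

/-- `S` is in the demand set of valuation `v` at prices `p`. -/
def InDemand {m : ℕ} (v : Finset (Fin m) → ℝ) (p : Fin m → ℝ) (S : Finset (Fin m)) : Prop :=
  ∀ T : Finset (Fin m), v T - ∑ j ∈ T, p j ≤ v S - ∑ j ∈ S, p j

/-- Gross substitutes valuations. -/
def IsGS {m : ℕ} (v : Finset (Fin m) → ℝ) : Prop :=
  IsValuation v ∧
    ∀ p q : Fin m → ℝ, (∀ j, p j ≤ q j) →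
      ∀ S : Finset (Fin m), InDemand v p S →
        ∃ T : Finset (Fin m), InDemand v q T ∧ ∀ j ∈ S, p j = q j → j ∈ T

/-- Additive valuations. -/
def IsAdditive {m : ℕ} (v : Finset (Fin m) → ℝ) : Prop :=
  ∃ w : Fin m → ℝ, (∀ j, 0 ≤ w j) ∧ ∀ S : Finset (Fin m), v S = ∑ j ∈ S, w j

/-- XOS valuations: a max over a nonempty finite family of nonnegative additive valuations. -/
def IsXOS {m : ℕ} (v : Finset (Fin m) → ℝ) : Prop :=
  ∃ (k : ℕ) (w : Fin (k + 1) → Fin m → ℝ),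
    (∀ i j, 0 ≤ w i j) ∧
    ∀ S : Finset (Fin m),
      v S = Finset.univ.sup' Finset.univ_nonempty (fun i => ∑ j ∈ S, w i j)

def GSvals (m : ℕ) : Set (Finset (Fin m) → ℝ) := {u | IsGS u}
def XOSvals (m : ℕ) : Set (Finset (Fin m) → ℝ) := {u | IsXOS u}

/-- The welfare `W^b(S)`: the maximum of `∑ i, b i (X i)` over allocations (pairwise disjoint
tuples of subsets) contained in `S`. -/
noncomputable def W {n m : ℕ} (b : Fin n → Finset (Fin m) → ℝ) (S : Finset (Fin m)) : ℝ :=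
  sSup {t : ℝ | ∃ X : Fin n → Finset (Fin m),
    (∀ i j : Fin n, i ≠ j → Disjoint (X i) (X j)) ∧ (∀ i, X i ⊆ S) ∧ t = ∑ i, b i (X i)}

/-- The welfare `W^{b₋ᵢ}(S)` with agent `i` omitted. -/
noncomputable def Wminus {n m : ℕ} (b : Fin n → Finset (Fin m) → ℝ) (i : Fin n)
    (S : Finset (Fin m)) : ℝ :=
  sSup {t : ℝ | ∃ X : Fin n → Finset (Fin m),
    (∀ k l : Fin n, k ≠ l → Disjoint (X k) (X l)) ∧ (∀ k, X k ⊆ S) ∧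
    t = ∑ k ∈ Finset.univ.erase i, b k (X k)}

/-- The welfare `W^b(x)` for a multiplicity vector `x : Fin m → ℕ`: maximum of `∑ i, b i (X i)`
over tuples of sets in which each item `j` is used at most `x j` times. -/
noncomputable def Wmult {n m : ℕ} (b : Fin n → Finset (Fin m) → ℝ) (x : Fin m → ℕ) : ℝ :=
  sSup {t : ℝ | ∃ X : Fin n → Finset (Fin m),
    (∀ j : Fin m, (Finset.univ.filter fun i => j ∈ X i).card ≤ x j) ∧ t = ∑ i, b i (X i)}

/-- The optimal welfare for the true valuations. -/
noncomputable def OPT {n m : ℕ} (v : Fin n → Finset (Fin m) → ℝ) : ℝ := W v Finset.univ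

/-- A mechanism: allocation and payment maps on bid profiles. -/
structure Mechanism (n m : ℕ) where
  alloc : (Fin n → Finset (Fin m) → ℝ) → Fin n → Finset (Fin m)
  pay : (Fin n → Finset (Fin m) → ℝ) → Fin n → ℝ

/-- A bid profile lies in the bid space `B`. -/
def InBidSpace {n m : ℕ} (B : Set (Finset (Fin m) → ℝ))
    (b : Fin n → Finset (Fin m) → ℝ) : Prop :=
  ∀ i, b i ∈ B

/-- On bid profiles from `B`, the allocation is pairwise disjoint. -/
def AllocDisjoint {n m : ℕ} (M : Mechanism n m) (B : Set (Finset (Fin m) → ℝ)) : Prop :=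
  ∀ b, InBidSpace B b → ∀ i j : Fin n, i ≠ j → Disjoint (M.alloc b i) (M.alloc b j)

/-- On bid profiles from `B`, payments are nonnegative. -/
def PayNonneg {n m : ℕ} (M : Mechanism n m) (B : Set (Finset (Fin m) → ℝ)) : Prop :=
  ∀ b, InBidSpace B b → ∀ i, 0 ≤ M.pay b i

/-- The utility of agent `i` with true valuation `v` under bid profile `b`. -/
noncomputable def util {n m : ℕ} (M : Mechanism n m) (v : Finset (Fin m) → ℝ) (i : Fin n)
    (b : Fin n → Finset (Fin m) → ℝ) : ℝ :=
  v (M.alloc b i) - M.pay b i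

/-- Declared welfare maximizer. -/
def IsDWM {n m : ℕ} (M : Mechanism n m) (B : Set (Finset (Fin m) → ℝ)) : Prop :=
  (∀ b, InBidSpace B b → ∑ i, b i (M.alloc b i) = W b Finset.univ) ∧
  (∀ b, InBidSpace B b → ∀ i, M.pay b i ≤ b i (M.alloc b i)) ∧
  (∀ b, InBidSpace B b → ∀ i : Fin n, ∃ b' : Fin n → Finset (Fin m) → ℝ,
    InBidSpace B b' ∧ b' i = b i ∧ M.alloc b' i = M.alloc b i ∧
    M.pay b' i = b i (M.alloc b i))

/-- English Walrasian mechanism: welfare-maximizing allocation w.r.t. the bids, with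
payments given by the minimum Walrasian prices `W^b(𝟙 + e_j) − W^b(𝟙)`. -/
def IsEnglish {n m : ℕ} (M : Mechanism n m) (B : Set (Finset (Fin m) → ℝ)) : Prop :=
  (∀ b, InBidSpace B b → ∑ i, b i (M.alloc b i) = W b Finset.univ) ∧
  (∀ b, InBidSpace B b → ∀ i, M.pay b i =
    ∑ j ∈ M.alloc b i,
      (Wmult b (fun k => if k = j then 2 else 1) - Wmult b (fun _ => 1)))

/-- VCG mechanism: welfare-maximizing allocation w.r.t. the bids, with externality payments. -/
def IsVCG {n m : ℕ} (M : Mechanism n m) (B : Set (Finset (Fin m) → ℝ)) : Prop :=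
  (∀ b, InBidSpace B b → ∑ i, b i (M.alloc b i) = W b Finset.univ) ∧
  (∀ b, InBidSpace B b → ∀ i, M.pay b i =
    Wminus b i Finset.univ - Wminus b i (Finset.univ \ M.alloc b i))

/-- Bid `bi` of agent `i` with true valuation `v` has exposure factor `γ`. -/
def HasExposureFactor {n m : ℕ} (M : Mechanism n m) (B : Set (Finset (Fin m) → ℝ))
    (v : Finset (Fin m) → ℝ) (i : Fin n) (bi : Finset (Fin m) → ℝ) (γ : ℝ) : Prop :=
  ∀ b : Fin n → Finset (Fin m) → ℝ, InBidSpace B b → b i = bi →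
    M.pay b i ≤ (1 + γ) * v (M.alloc b i)

/-- `b` is a pure Nash equilibrium for true valuations `v`. -/
noncomputable def IsNash {n m : ℕ} (M : Mechanism n m) (B : Set (Finset (Fin m) → ℝ))
    (v b : Fin n → Finset (Fin m) → ℝ) : Prop :=
  InBidSpace B b ∧
  ∀ i : Fin n, ∀ bi' ∈ B, util M (v i) i (Function.update b i bi') ≤ util M (v i) i b

/-- A finitely supported probability distribution. -/
structure FinDist (α : Type*) where
  supp : Finset α
  μ : α → ℝ
  nonneg : ∀ a, 0 ≤ μ a
  sum_one : ∑ a ∈ supp, μ a = 1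

/-- Expectation of `f` under a finitely supported distribution. -/
noncomputable def FinDist.exp {α : Type*} (D : FinDist α) (f : α → ℝ) : ℝ :=
  ∑ a ∈ D.supp, D.μ a * f a

/-- Bayes-Nash equilibrium: strategies map types in `V` to bids in `B`, and no unilateral
deviation (depending only on the agent's own type) improves expected utility. -/
noncomputable def IsBNE {n m : ℕ} (M : Mechanism n m) (V B : Set (Finset (Fin m) → ℝ))
    (D : FinDist (Fin n → Finset (Fin m) → ℝ))
    (s : Fin n → (Finset (Fin m) → ℝ) → Finset (Fin m) → ℝ) : Prop :=
  (∀ i : Fin n, ∀ vi ∈ V, s i vi ∈ B) ∧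
  ∀ i : Fin n, ∀ s' : (Finset (Fin m) → ℝ) → Finset (Fin m) → ℝ, (∀ vi ∈ V, s' vi ∈ B) →
    D.exp (fun v => util M (v i) i (Function.update (fun k => s k (v k)) i (s' (v i)))) ≤
    D.exp (fun v => util M (v i) i (fun k => s k (v k)))

/-- Strategy `si` of agent `i` has exposure factor `γ` under distribution `D`. -/
noncomputable def BayesExposure {n m : ℕ} (M : Mechanism n m)
    (V B : Set (Finset (Fin m) → ℝ)) (D : FinDist (Fin n → Finset (Fin m) → ℝ)) (i : Fin n)
    (si : (Finset (Fin m) → ℝ) → Finset (Fin m) → ℝ) (γ : ℝ) : Prop :=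
  ∀ c : (Finset (Fin m) → ℝ) → Fin n → Finset (Fin m) → ℝ,
    (∀ vi ∈ V, InBidSpace B (c vi) ∧ c vi i = si vi) →
    D.exp (fun v => M.pay (c (v i)) i) ≤
      (1 + γ) * D.exp (fun v => (v i) (M.alloc (c (v i)) i))

/-!
Fix additive prices `ρ k` supporting each equilibrium bid `b k` at its bundle `X k`, so that
`∑ₖ ρ k (X k) = W^b`. Against an optimal bundle `O i`, agent `i` can deviate to the additive bid
worth half of supporting prices of `v i` at `O i`. Welfare maximization, compared with the hybrid
allocation (`O i` to `i`, `X k \ O i` to the others), gives this bid a value of at least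
`v i (O i) / 2 - b i (X i) - ∑ₖ ρ k (X k ∩ O i)` on the bundle it wins; since it never exceeds
half the true value, the Nash condition caps that by `v i (X i)`. Summed over `i`, the price
terms total at most `W^b`, and threshold bidding with exposure `γ` gives
`W^b ≤ (1 + γ) ∑ᵢ v i (X i)`, so `OPT / 2 ≤ (3 + 2γ) ∑ᵢ v i (X i)`.
-/

section Valuations

variable {m : ℕ}

structure IsSupportingPrices (v : Finset (Fin m) → ℝ) (S : Finset (Fin m)) (q : Fin m → ℝ) :
    Prop where
  nonneg : ∀ j, 0 ≤ q j
  sum_le : ∀ T ⊆ S, ∑ j ∈ T, q j ≤ v T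
  sum_eq : ∑ j ∈ S, q j = v S

namespace IsXOS

variable {v : Finset (Fin m) → ℝ}

theorem nonneg (h : IsXOS v) (S : Finset (Fin m)) : 0 ≤ v S := by
  obtain ⟨k, w, hw0, hw⟩ := h
  rw [hw]
  exact (sum_nonneg fun j _ => hw0 0 j).trans (le_sup' (fun i => ∑ j ∈ S, w i j) (mem_univ 0))

theorem monotone (h : IsXOS v) : Monotone v := by
  obtain ⟨k, w, hw0, hw⟩ := h
  intro S T hST
  rw [hw, hw]
  exact sup'_le _ _ fun i _ => (sum_le_sum_of_subset_of_nonneg hST fun j _ _ => hw0 i j).trans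
    (le_sup' (fun i => ∑ j ∈ T, w i j) (mem_univ i))

theorem exists_isSupportingPrices (h : IsXOS v) (S : Finset (Fin m)) :
    ∃ q, IsSupportingPrices v S q := by
  obtain ⟨k, w, hw0, hw⟩ := h
  obtain ⟨i, -, hi⟩ := exists_mem_eq_sup' univ_nonempty fun i : Fin (k + 1) => ∑ j ∈ S, w i j
  refine ⟨w i, ⟨hw0 i, fun T _ => ?_, by rw [hw, ← hi]⟩⟩
  rw [hw]
  exact le_sup' (fun i => ∑ j ∈ T, w i j) (mem_univ i)

end IsXOS

theorem IsSupportingPrices.le_add_sum_inter {v : Finset (Fin m) → ℝ} {S : Finset (Fin m)}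
    {q : Fin m → ℝ} (hq : IsSupportingPrices v S q) (O : Finset (Fin m)) :
    v S ≤ v (S \ O) + ∑ j ∈ S ∩ O, q j := by
  rw [← hq.sum_eq, ← sum_inter_add_sum_sdiff S O q, add_comm]
  exact add_le_add (hq.sum_le _ sdiff_subset) le_rfl

noncomputable def halfPriceBid (O : Finset (Fin m)) (q : Fin m → ℝ) (S : Finset (Fin m)) : ℝ :=
  (∑ j ∈ S ∩ O, q j) / 2

theorem isAdditive_halfPriceBid {O : Finset (Fin m)} {q : Fin m → ℝ} (hq : ∀ j, 0 ≤ q j) :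
    IsAdditive (halfPriceBid O q) := by
  refine ⟨fun j => if j ∈ O then q j / 2 else 0, fun j => ?_, fun S => ?_⟩
  · show 0 ≤ if j ∈ O then q j / 2 else 0
    split_ifs
    exacts [div_nonneg (hq j) zero_le_two, le_rfl]
  · rw [halfPriceBid, sum_ite_mem, sum_div]

theorem IsSupportingPrices.halfPriceBid_self {v : Finset (Fin m) → ℝ} {O : Finset (Fin m)}
    {q : Fin m → ℝ} (hq : IsSupportingPrices v O q) : halfPriceBid O q O = v O / 2 := by
  rw [halfPriceBid, inter_self, hq.sum_eq]

theorem IsSupportingPrices.two_mul_halfPriceBid_le {v : Finset (Fin m) → ℝ}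
    {O : Finset (Fin m)} {q : Fin m → ℝ} (hq : IsSupportingPrices v O q) (hv : Monotone v)
    (S : Finset (Fin m)) : 2 * halfPriceBid O q S ≤ v S := by
  rw [halfPriceBid, mul_div_cancel₀ _ two_ne_zero]
  exact (hq.sum_le _ inter_subset_right).trans (hv inter_subset_left)

end Valuations

theorem sum_sum_inter_le_sum {ι α β : Type*} [DecidableEq α] [AddCommMonoid β] [PartialOrder β]
    [IsOrderedAddMonoid β] {s : Finset ι} {O : ι → Finset α}
    (hO : (s : Set ι).PairwiseDisjoint O) (S : Finset α) {f : α → β}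
    (hf : ∀ a ∈ S, 0 ≤ f a) : ∑ i ∈ s, ∑ a ∈ S ∩ O i, f a ≤ ∑ a ∈ S, f a := by
  rw [← sum_biUnion (hO.mono fun i => inter_subset_right)]
  exact sum_le_sum_of_subset_of_nonneg (biUnion_subset.2 fun i _ => inter_subset_left)
    fun a ha _ => hf a ha

section Welfare

variable {n m : ℕ}

theorem le_W (b : Fin n → Finset (Fin m) → ℝ) {S : Finset (Fin m)} {X : Fin n → Finset (Fin m)}
    (hX : ∀ i j, i ≠ j → Disjoint (X i) (X j)) (hXS : ∀ i, X i ⊆ S) :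
    ∑ i, b i (X i) ≤ W b S := by
  refine le_csSup ?_ ⟨X, hX, hXS, rfl⟩
  refine (Set.finite_range fun X : Fin n → Finset (Fin m) => ∑ i, b i (X i)).subset ?_
    |>.bddAbove
  rintro t ⟨X, -, -, rfl⟩
  exact ⟨X, rfl⟩

theorem W_le {b : Fin n → Finset (Fin m) → ℝ} {S : Finset (Fin m)} {c : ℝ}
    (h : ∀ X : Fin n → Finset (Fin m), (∀ i j, i ≠ j → Disjoint (X i) (X j)) →
      (∀ i, X i ⊆ S) → ∑ i, b i (X i) ≤ c) : W b S ≤ c := by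
  refine csSup_le ⟨_, fun _ => ∅, fun _ _ _ => disjoint_empty_left _,
    fun _ => empty_subset _, rfl⟩ ?_
  rintro t ⟨X, hX, hXS, rfl⟩
  exact h X hX hXS

theorem sum_update_apply (b : Fin n → Finset (Fin m) → ℝ) (i : Fin n) (b' : Finset (Fin m) → ℝ)
    (X : Fin n → Finset (Fin m)) :
    ∑ k, Function.update b i b' k (X k) = b' (X i) + ∑ k ∈ univ.erase i, b k (X k) := by
  rw [← add_sum_erase _ _ (mem_univ i), Function.update_self]
  congr 1
  exact sum_congr rfl fun k hk => by rw [Function.update_of_ne (ne_of_mem_erase hk)]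

end Welfare

section Mechanism

variable {n m : ℕ} {M : Mechanism n m} {B : Set (Finset (Fin m) → ℝ)}
  {b : Fin n → Finset (Fin m) → ℝ}

theorem InBidSpace.update (hb : InBidSpace B b) (i : Fin n) {b' : Finset (Fin m) → ℝ}
    (hb' : b' ∈ B) : InBidSpace B (Function.update b i b') := by
  intro k
  rcases eq_or_ne k i with rfl | hk
  · rwa [Function.update_self]
  · rw [Function.update_of_ne hk]
    exact hb k

namespace IsDWM

theorem sum_le_sum_alloc (hDWM : IsDWM M B) (hb : InBidSpace B b) {X : Fin n → Finset (Fin m)}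
    (hX : ∀ i j, i ≠ j → Disjoint (X i) (X j)) :
    ∑ k, b k (X k) ≤ ∑ k, b k (M.alloc b k) := by
  rw [hDWM.1 b hb]
  exact le_W b hX fun _ => subset_univ _

/-- Against the threshold profile of clause (iii) the bid `b i` pays exactly its declared value. -/
theorem bid_le_of_hasExposureFactor (hDWM : IsDWM M B) (hb : InBidSpace B b)
    {v : Finset (Fin m) → ℝ} {i : Fin n} {γ : ℝ} (hexp : HasExposureFactor M B v i (b i) γ) :
    b i (M.alloc b i) ≤ (1 + γ) * v (M.alloc b i) := by
  obtain ⟨b', hb'B, hb'i, halloc, hpay⟩ := hDWM.2.2 b hb i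
  simpa only [hpay, halloc] using hexp b' hb'B hb'i

/-- Compare the allocation chosen after the deviation with the hybrid allocation giving `O` to `i`
and `M.alloc b k \ O` to every other `k`. -/
theorem deviation_welfare (hDWM : IsDWM M B) (hM : AllocDisjoint M B) (hb : InBidSpace B b)
    (hbnn : ∀ k S, 0 ≤ b k S) (i : Fin n) {b' : Finset (Fin m) → ℝ} (hb' : b' ∈ B)
    (O : Finset (Fin m)) :
    b' O + ∑ k ∈ univ.erase i, b k (M.alloc b k \ O) ≤
      b' (M.alloc (Function.update b i b') i) + ∑ k, b k (M.alloc b k) := by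
  set c := Function.update b i b'
  have hc : InBidSpace B c := hb.update i hb'
  set Z := Function.update (fun k => M.alloc b k \ O) i O
  have hZ : ∀ k l, k ≠ l → Disjoint (Z k) (Z l) := by
    intro k l hkl
    rcases eq_or_ne k i with rfl | hk
    · simpa [Z, Function.update_of_ne (Ne.symm hkl)] using disjoint_sdiff
    rcases eq_or_ne l i with rfl | hl
    · simpa [Z, Function.update_of_ne hk] using sdiff_disjoint
    simpa only [Z, Function.update_of_ne hk, Function.update_of_ne hl] using
      (hM b hb k l hkl).mono sdiff_subset sdiff_subset
  have hcZ := hDWM.sum_le_sum_alloc hc hZ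
  have hothers : ∑ k ∈ univ.erase i, b k (M.alloc c k) ≤ ∑ k, b k (M.alloc b k) :=
    (sum_le_sum_of_subset_of_nonneg (erase_subset i univ) fun k _ _ => hbnn k _).trans
      (hDWM.sum_le_sum_alloc hb (hM c hc))
  have hZi : Z i = O := by simp [Z]
  rw [sum_update_apply, sum_update_apply, hZi] at hcZ
  have hZothers : ∑ k ∈ univ.erase i, b k (Z k) = ∑ k ∈ univ.erase i, b k (M.alloc b k \ O) :=
    sum_congr rfl fun k hk => by simp [Z, ne_of_mem_erase hk]
  linarith

end IsDWM

theorem IsNash.deviation_bid_le {v : Fin n → Finset (Fin m) → ℝ} (hNash : IsNash M B v b)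
    (hDWM : IsDWM M B) (hpay : PayNonneg M B) (i : Fin n) {b' : Finset (Fin m) → ℝ} (hb' : b' ∈ B)
    (hhalf : ∀ S, 2 * b' S ≤ v i S) :
    b' (M.alloc (Function.update b i b') i) ≤ v i (M.alloc b i) := by
  have hdev := hNash.2 i b' hb'
  have hpay_dev := hDWM.2.1 _ (hNash.1.update i hb') i
  rw [Function.update_self] at hpay_dev
  have := hpay b hNash.1 i
  have := hhalf (M.alloc (Function.update b i b') i)
  simp only [util] at hdev
  linarith

theorem IsNash.half_value_le (hAdd : ∀ u : Finset (Fin m) → ℝ, IsAdditive u → u ∈ B)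
    (hXOS : ∀ u ∈ B, IsXOS u) (hM : AllocDisjoint M B) (hpay : PayNonneg M B)
    (hDWM : IsDWM M B) {v : Fin n → Finset (Fin m) → ℝ} (hNash : IsNash M B v b) {i : Fin n}
    (hvi : IsXOS (v i)) {ρ : Fin n → Fin m → ℝ}
    (hρ : ∀ k, IsSupportingPrices (b k) (M.alloc b k) (ρ k)) (O : Finset (Fin m)) :
    v i O / 2 ≤
      v i (M.alloc b i) + b i (M.alloc b i) + ∑ k, ∑ j ∈ M.alloc b k ∩ O, ρ k j := by
  obtain ⟨q, hq⟩ := hvi.exists_isSupportingPrices O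
  have hb' : halfPriceBid O q ∈ B := hAdd _ (isAdditive_halfPriceBid hq.nonneg)
  have hwelfare := hDWM.deviation_welfare hM hNash.1
    (fun k => (hXOS _ (hNash.1 k)).nonneg) i hb' O
  rw [hq.halfPriceBid_self] at hwelfare
  have hdev := hNash.deviation_bid_le hDWM hpay i hb' (hq.two_mul_halfPriceBid_le hvi.monotone)
  have hothers : ∑ k ∈ univ.erase i, b k (M.alloc b k) ≤
      ∑ k ∈ univ.erase i, (b k (M.alloc b k \ O) + ∑ j ∈ M.alloc b k ∩ O, ρ k j) :=
    sum_le_sum fun k _ => (hρ k).le_add_sum_inter O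
  rw [sum_add_distrib] at hothers
  have hprices : ∑ k ∈ univ.erase i, ∑ j ∈ M.alloc b k ∩ O, ρ k j ≤
      ∑ k, ∑ j ∈ M.alloc b k ∩ O, ρ k j :=
    sum_le_sum_of_subset_of_nonneg (erase_subset i univ)
      fun k _ _ => sum_nonneg fun j _ => (hρ k).nonneg j
  have := add_sum_erase univ (fun k => b k (M.alloc b k)) (mem_univ i)
  linarith

end Mechanism

theorem stmt6_general {n m : ℕ} (B : Set (Finset (Fin m) → ℝ))
    (hAdd : ∀ u : Finset (Fin m) → ℝ, IsAdditive u → u ∈ B)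
    (hXOS : ∀ u ∈ B, IsXOS u)
    (M : Mechanism n m)
    (hM : AllocDisjoint M B) (hpay : PayNonneg M B) (hDWM : IsDWM M B)
    (γ : ℝ)
    (v : Fin n → Finset (Fin m) → ℝ) (hv : ∀ i, IsXOS (v i))
    (b : Fin n → Finset (Fin m) → ℝ) (hNash : IsNash M B v b)
    (hexp : ∀ i : Fin n, HasExposureFactor M B (v i) i (b i) γ) :
    OPT v ≤ (6 + 4 * γ) * ∑ i, v i (M.alloc b i) := by
  classical
  set X := M.alloc b
  choose ρ hρ using fun k => (hXOS _ (hNash.1 k)).exists_isSupportingPrices (X k)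
  have hbids : ∑ i, b i (X i) ≤ (1 + γ) * ∑ i, v i (X i) := by
    rw [mul_sum]
    exact sum_le_sum fun i _ => hDWM.bid_le_of_hasExposureFactor hNash.1 (hexp i)
  refine W_le fun O hO _ => ?_
  have hsmooth : ∑ i, v i (O i) / 2 ≤
      ∑ i, v i (X i) + ∑ i, b i (X i) + ∑ i, ∑ k, ∑ j ∈ X k ∩ O i, ρ k j := by
    rw [← sum_add_distrib, ← sum_add_distrib]
    exact sum_le_sum fun i _ => hNash.half_value_le hAdd hXOS hM hpay hDWM (hv i) hρ (O i)
  have hprices : ∑ i, ∑ k, ∑ j ∈ X k ∩ O i, ρ k j ≤ ∑ k, b k (X k) := by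
    rw [sum_comm]
    exact sum_le_sum fun k _ => (sum_sum_inter_le_sum (fun i _ j _ hij => hO i j hij) (X k)
      fun j _ => (hρ k).nonneg j).trans_eq (hρ k).sum_eq
  rw [← sum_div] at hsmooth
  linarith

/-- restricted bidding languages, Add ⊆ 𝓑 ⊆ XOS: for XOS true valuations,
PoA_γ ≤ 6 + 4γ for declared welfare maximizers. -/
theorem stmt6 {n m : ℕ} (B : Set (Finset (Fin m) → ℝ))
    (hAdd : ∀ u : Finset (Fin m) → ℝ, IsAdditive u → u ∈ B)
    (hXOS : ∀ u ∈ B, IsXOS u)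
    (M : Mechanism n m)
    (hM : AllocDisjoint M B) (hpay : PayNonneg M B) (hDWM : IsDWM M B)
    (γ : ℝ) (hγ : 0 ≤ γ)
    (v : Fin n → Finset (Fin m) → ℝ) (hv : ∀ i, IsXOS (v i))
    (b : Fin n → Finset (Fin m) → ℝ) (hNash : IsNash M B v b)
    (hexp : ∀ i : Fin n, HasExposureFactor M B (v i) i (b i) γ) :
    OPT v ≤ (6 + 4 * γ) * ∑ i, v i (M.alloc b i) :=
  stmt6_general B hAdd hXOS M hM hpay hDWM γ v hv b hNash hexp
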